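/- arXiv:1704.06831 — 2 statements merged into one kernel-verified Lean document; each statement's English description precedes it below -/
import Mathlib

section
/- Let p ∈ (1/3, 1/2) and let S ~ Binomial(m, p). Using the bounds D(a‖p) ≤ (a−p)²/(p(1−p)) for the Bernoulli KL divergence and C(m,k)p^k(1−p)^{m−k} ≥ exp(−m·D(k/m‖p))/√(8m(k/m)(1−k/m)), one has P(S ≤ m/3) ≥ exp(−m·(p − 1/3 + √(2/m))²/(p(1−p))), provided √(2m) is an integer and m ≥ 3. -/
/-!
Stirling's bounds `√(2πn) (n/e)ⁿ ≤ n! ≤ e √n (n/e)ⁿ` give, for `0 < k ≤ m/3`,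
`C(m,k) pᵏ (1-p)ᵐ⁻ᵏ ≥ (mp/k)ᵏ (m(1-p)/(m-k))ᵐ⁻ᵏ / √(2m)`, and `log x ≥ 1 - 1/x` bounds the
likelihood ratio (the KL term) below by `exp (-m (p - k/m)² / (p(1-p)))`. Each of the
`j = √(2m)` values of `k` just below `m/3` has `p - k/m ≤ p - 1/3 + √(2/m)`, so these terms add
up to the claim. When `m ≤ 18`, `√(2/m) ≥ 1/3` and the term `k = 0` alone suffices.
-/

open Real Finset
open scoped Nat

lemma exp_mul_one_sub_inv_le_pow {x : ℝ} (hx : 0 < x) (n : ℕ) :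
    exp (n * (1 - x⁻¹)) ≤ x ^ n := by
  rw [exp_nat_mul]
  gcongr
  exact (le_log_iff_exp_le hx).1 (one_sub_inv_le_log_of_pos hx)

lemma factorial_le_exp_one_mul_sqrt_mul_div_exp_pow {n : ℕ} (hn : n ≠ 0) :
    (n ! : ℝ) ≤ exp 1 * √n * (n / exp 1) ^ n := by
  obtain ⟨k, rfl⟩ := Nat.exists_eq_add_of_le' (Nat.pos_of_ne_zero hn)
  have h : Stirling.stirlingSeq (k + 1) ≤ Stirling.stirlingSeq 1 :=
    Stirling.stirlingSeq'_antitone (Nat.zero_le k)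
  rw [Stirling.stirlingSeq_one, Stirling.stirlingSeq,
    div_le_div_iff₀ (by positivity) (by positivity), sqrt_mul zero_le_two] at h
  have h2 : (0 : ℝ) < √2 := by positivity
  nlinarith

/-- The right side is `exp (-(k + l) D(k/(k+l) ‖ p))`; applying `log x ≥ 1 - 1/x` to each factor
bounds this Bernoulli KL divergence by the χ² divergence. -/
lemma exp_neg_chiSq_le_pow_mul_pow {k l : ℕ} (hk : k ≠ 0) (hl : l ≠ 0) {p : ℝ} (hp0 : 0 < p)
    (hp1 : p < 1) :
    exp (-(k + l : ℝ) * (p - k / (k + l)) ^ 2 / (p * (1 - p))) ≤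
      ((k + l) * p / k) ^ k * ((k + l) * (1 - p) / l) ^ l := by
  have hq : 0 < 1 - p := sub_pos.2 hp1
  have hexp : -(k + l : ℝ) * (p - k / (k + l)) ^ 2 / (p * (1 - p)) =
      k * (1 - ((k + l) * p / k)⁻¹) + l * (1 - ((k + l) * (1 - p) / l)⁻¹) := by
    field_simp
    ring
  rw [hexp, exp_add]
  gcongr <;> exact exp_mul_one_sub_inv_le_pow (by positivity) _

lemma sqrt_two_pi_mul_pow_le_add_choose {k l : ℕ} (hk : k ≠ 0) (hl : l ≠ 0) :
    √(2 * π * (k + l)) * (k + l : ℝ) ^ (k + l) ≤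
      exp 1 ^ 2 * √(k * l) * k ^ k * l ^ l * (k + l).choose k := by
  have hfac : ((k + l) ! : ℝ) = (k + l).choose k * k ! * l ! := by
    rw [Nat.choose_symm_add]
    exact_mod_cast (Nat.add_choose_mul_factorial_mul_factorial k l).symm
  have hlow := Stirling.le_factorial_stirling (k + l)
  have hk! := factorial_le_exp_one_mul_sqrt_mul_div_exp_pow hk
  have hl! := factorial_le_exp_one_mul_sqrt_mul_div_exp_pow hl
  push_cast at hlow
  calc √(2 * π * (k + l)) * (k + l : ℝ) ^ (k + l)
      = exp 1 ^ (k + l) * (√(2 * π * (k + l)) * ((k + l) / exp 1) ^ (k + l)) := by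
        rw [div_pow]
        field_simp
    _ ≤ exp 1 ^ (k + l) * ((k + l).choose k * k ! * l !) := by
        rw [← hfac]; gcongr
    _ ≤ exp 1 ^ (k + l) * ((k + l).choose k * (exp 1 * √k * (k / exp 1) ^ k) *
          (exp 1 * √l * (l / exp 1) ^ l)) := by gcongr
    _ = exp 1 ^ 2 * √(k * l) * k ^ k * l ^ l * (k + l).choose k := by
        rw [sqrt_mul (Nat.cast_nonneg _), div_pow, div_pow, pow_add]
        field_simp

/-- From `2k ≤ l` one gets `9kl ≤ 2(k+l)²`, and the claim reduces to `e⁴ ≤ 18π`; at `k = l`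
it would need the false `e⁴ ≤ 16π`. -/
lemma exp_one_sq_mul_sqrt_mul_le {k l : ℕ} (hkl : 2 * k ≤ l) :
    exp 1 ^ 2 * √(k * l) ≤ √(2 * π * (k + l)) * √(2 * (k + l)) := by
  have hkl' : (2 * k : ℝ) ≤ l := by exact_mod_cast hkl
  have he : exp 1 ^ 4 ≤ 18 * π := by
    have he9 := exp_one_lt_d9
    have hpi := pi_gt_d6
    nlinarith [pow_le_pow_left₀ (exp_pos 1).le he9.le 4]
  have hkl2 : 9 * (k * l : ℝ) ≤ 2 * (k + l) ^ 2 := by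
    nlinarith [mul_nonneg (sub_nonneg.2 hkl') (by linarith : (0:ℝ) ≤ 2 * l - k)]
  calc exp 1 ^ 2 * √(k * l) = √((exp 1 ^ 2) ^ 2 * (k * l)) := by
        rw [sqrt_mul (by positivity : (0 : ℝ) ≤ (exp 1 ^ 2) ^ 2), sqrt_sq (by positivity)]
    _ ≤ √(2 * π * (k + l) * (2 * (k + l))) := sqrt_le_sqrt (by nlinarith [pi_pos])
    _ = √(2 * π * (k + l)) * √(2 * (k + l)) := sqrt_mul (by positivity) _

lemma exp_neg_chiSq_div_sqrt_le_binomial_term {k l : ℕ} (hk : k ≠ 0) (hkl : 2 * k ≤ l)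
    {p : ℝ} (hp0 : 0 < p) (hp1 : p < 1) :
    exp (-(k + l : ℝ) * (p - k / (k + l)) ^ 2 / (p * (1 - p))) / √(2 * (k + l)) ≤
      (k + l).choose k * p ^ k * (1 - p) ^ l := by
  have hl : l ≠ 0 := by omega
  have hE := exp_neg_chiSq_le_pow_mul_pow hk hl hp0 hp1
  have hC := sqrt_two_pi_mul_pow_le_add_choose hk hl
  have hpre := exp_one_sq_mul_sqrt_mul_le hkl
  set E := exp (-(k + l : ℝ) * (p - k / (k + l)) ^ 2 / (p * (1 - p)))
  set C : ℝ := ((k + l).choose k : ℝ)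
  set S := √(2 * π * (k + l)) * (k + l : ℝ) ^ (k + l)
  rw [div_le_iff₀ (by positivity)]
  refine le_of_mul_le_mul_right ?_ (by positivity : 0 < S)
  calc E * S
      ≤ ((k + l) * p / k) ^ k * ((k + l) * (1 - p) / l) ^ l *
          (exp 1 ^ 2 * √(k * l) * k ^ k * l ^ l * C) := by gcongr
    _ = exp 1 ^ 2 * √(k * l) * ((k + l : ℝ) ^ (k + l) * p ^ k * (1 - p) ^ l * C) := by
        rw [div_pow, div_pow, mul_pow, mul_pow, pow_add]
        field_simp
    _ ≤ √(2 * π * (k + l)) * √(2 * (k + l)) *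
          ((k + l : ℝ) ^ (k + l) * p ^ k * (1 - p) ^ l * C) := by gcongr
    _ = C * p ^ k * (1 - p) ^ l * √(2 * (k + l)) * S := by ring

lemma exp_neg_mul_sq_div_le_of_le {m c a b : ℝ} (hm : 0 ≤ m) (hc : 0 < c) (ha : 0 ≤ a)
    (hab : a ≤ b) : exp (-m * b ^ 2 / c) ≤ exp (-m * a ^ 2 / c) := by
  simp only [neg_mul, neg_div, exp_le_exp, neg_le_neg_iff]
  gcongr

lemma exp_neg_mul_sq_div_le_one_sub_pow (m : ℕ) {p x : ℝ} (hp0 : 0 < p) (hp1 : p < 1)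
    (hpx : p ≤ x) : exp (-m * x ^ 2 / (p * (1 - p))) ≤ (1 - p) ^ m := by
  have hq : 0 < 1 - p := sub_pos.2 hp1
  calc exp (-m * x ^ 2 / (p * (1 - p)))
      ≤ exp (-m * p ^ 2 / (p * (1 - p))) :=
        exp_neg_mul_sq_div_le_of_le m.cast_nonneg (by positivity) hp0.le hpx
    _ = exp (m * (1 - (1 - p)⁻¹)) := by
        congr 1
        field_simp
        ring
    _ ≤ (1 - p) ^ m := exp_mul_one_sub_inv_le_pow hq m

lemma sqrt_two_div_eq_div {m j : ℕ} (hj : (j : ℝ) = √(2 * m)) : √(2 / m) = j / m := by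
  rcases eq_or_ne m 0 with rfl | hm
  · simp
  rw [hj, show (2 : ℝ) / m = 2 * m / m ^ 2 by field_simp, sqrt_div' _ (by positivity),
    sqrt_sq m.cast_nonneg]

lemma exp_div_le_binomial_term_of_near_third {m j x : ℕ} {p : ℝ} (hp : 1 / 3 < p)
    (hp1 : p < 1) (hj : (j : ℝ) = √(2 * m)) (hx : x ≠ 0) (hxm : 3 * x ≤ m) (hxj : m ≤ 3 * (x + j)) :
    exp (-m * (p - 1 / 3 + √(2 / m)) ^ 2 / (p * (1 - p))) / j ≤
      m.choose x * p ^ x * (1 - p) ^ (m - x) := by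
  have hm : (0 : ℝ) < m := by exact_mod_cast (by omega : 0 < m)
  have hxm₁ : (3 * x : ℝ) ≤ m := by exact_mod_cast hxm
  have hxj₁ : (m : ℝ) ≤ 3 * (x + j) := by exact_mod_cast hxj
  have hxm' : (x : ℝ) / m ≤ 1 / 3 := by
    rw [div_le_iff₀ hm]
    linarith
  have hdev : p - x / m ≤ p - 1 / 3 + √(2 / m) := by
    have : (1 : ℝ) / 3 ≤ (x + j) / m := by
      rw [le_div_iff₀ hm]
      linarith
    rw [sqrt_two_div_eq_div hj]
    linarith [add_div (x : ℝ) j m]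
  obtain ⟨l, rfl⟩ := Nat.exists_eq_add_of_le (by omega : x ≤ m)
  rw [Nat.add_sub_cancel_left, hj]
  refine le_trans ?_ (exp_neg_chiSq_div_sqrt_le_binomial_term hx (by omega) (by linarith) hp1)
  have hpq : 0 < p * (1 - p) := mul_pos (by linarith) (by linarith)
  push_cast at hxm' hdev ⊢
  gcongr ?_ / _
  refine exp_neg_mul_sq_div_le_of_le (by positivity) hpq ?_ hdev
  linarith

lemma exp_le_sum_Ico_binomial_term {m j : ℕ} {p : ℝ} (hp : 1 / 3 < p) (hp1 : p < 1)
    (hj : (j : ℝ) = √(2 * m)) (hj0 : j ≠ 0) (hjm : j ≤ m / 3) :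
    exp (-m * (p - 1 / 3 + √(2 / m)) ^ 2 / (p * (1 - p))) ≤
      ∑ x ∈ Ico (m / 3 + 1 - j) (m / 3 + 1),
        (m.choose x : ℝ) * p ^ x * (1 - p) ^ (m - x) := by
  have hcard : #(Ico (m / 3 + 1 - j) (m / 3 + 1)) = j := by
    rw [Nat.card_Ico]
    omega
  calc exp (-m * (p - 1 / 3 + √(2 / m)) ^ 2 / (p * (1 - p)))
      = #(Ico (m / 3 + 1 - j) (m / 3 + 1)) •
          (exp (-m * (p - 1 / 3 + √(2 / m)) ^ 2 / (p * (1 - p))) / j) := by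
        rw [hcard, nsmul_eq_mul, mul_div_cancel₀ _ (by exact_mod_cast hj0)]
    _ ≤ _ := by
        refine card_nsmul_le_sum _ _ _ fun x hx => ?_
        rw [mem_Ico] at hx
        exact exp_div_le_binomial_term_of_near_third hp hp1 hj (by omega) (by omega) (by omega)

lemma subset_filter_le_div_three {m : ℕ} {s : Finset ℕ} (hs : ∀ x ∈ s, 3 * x ≤ m) :
    s ⊆ (range (m + 1)).filter (fun k : ℕ => (k : ℝ) ≤ m / 3) := by
  intro x hx
  have h3 : (3 * x : ℝ) ≤ m := by exact_mod_cast hs x hx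
  simp only [mem_filter, mem_range]
  exact ⟨by linarith [hs x hx], by linarith⟩

open Finset in
theorem binomial_tail_kl_lower_bound_general (m : ℕ) (p : ℝ)
    (hp : 1 / 3 < p) (hp2 : p < 1 / 2)
    (hsq : ∃ j : ℕ, (j : ℝ) = Real.sqrt (2 * m)) :
    ∑ k ∈ (Finset.range (m + 1)).filter (fun k : ℕ => (k : ℝ) ≤ m / 3),
      (m.choose k : ℝ) * p ^ k * (1 - p) ^ (m - k)
      ≥ Real.exp (-(m : ℝ) * (p - 1 / 3 + Real.sqrt (2 / m)) ^ 2 /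
          (p * (1 - p))) := by
  obtain ⟨j, hj⟩ := hsq
  have hjj : j * j = 2 * m := by
    exact_mod_cast (hj ▸ mul_self_sqrt (by positivity) : (j : ℝ) * j = 2 * m)
  have hterm : ∀ k, 0 ≤ (m.choose k : ℝ) * p ^ k * (1 - p) ^ (m - k) := fun k =>
    mul_nonneg (mul_nonneg (Nat.cast_nonneg _) (pow_nonneg (by linarith) _))
      (pow_nonneg (by linarith) _)
  rcases eq_or_ne m 0 with rfl | hm
  · simp
  rcases le_or_gt j 6 with hj6 | hj7
  · have hm18 : (m : ℝ) ≤ 18 := by exact_mod_cast (by nlinarith : m ≤ 18)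
    have hthird : 1 / 3 ≤ √(2 / m) := by
      rw [le_sqrt' (by norm_num), le_div_iff₀ (by positivity)]
      linarith
    refine le_trans ?_ (single_le_sum (fun k _ => hterm k)
      (subset_filter_le_div_three (s := {0}) (by simp) (mem_singleton_self 0)))
    simpa using exp_neg_mul_sq_div_le_one_sub_pow m (p := p) (x := p - 1 / 3 + √(2 / m))
      (by linarith) (by linarith) (by linarith)
  · have h7j : 7 * j ≤ 2 * m := hjj ▸ Nat.mul_le_mul_right j hj7
    refine (exp_le_sum_Ico_binomial_term hp (by linarith) hj (by omega) (by omega)).trans ?_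
    refine sum_le_sum_of_subset_of_nonneg (subset_filter_le_div_three fun x hx => ?_)
      fun k _ _ => hterm k
    rw [mem_Ico] at hx
    omega

open Finset in
/-- Binomial left-tail lower bound via the KL divergence (Step 1 of the proof
of Theorem 3): P(S ≤ m/3) ≥ exp(−m(p − 1/3 + √(2/m))²/(p(1−p))). -/
theorem binomial_tail_kl_lower_bound (m : ℕ) (p : ℝ)
    (hp : 1 / 3 < p) (hp2 : p < 1 / 2) (hm : 3 ≤ m)
    (hsq : ∃ j : ℕ, (j : ℝ) = Real.sqrt (2 * m)) :
    ∑ k ∈ (Finset.range (m + 1)).filter (fun k : ℕ => (k : ℝ) ≤ m / 3),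
      (m.choose k : ℝ) * p ^ k * (1 - p) ^ (m - k)
      ≥ Real.exp (-(m : ℝ) * (p - 1 / 3 + Real.sqrt (2 / m)) ^ 2 /
          (p * (1 - p))) :=
  binomial_tail_kl_lower_bound_general m p hp hp2 hsq
end

section
/- For any integers m ≥ 1 and 1 ≤ k ≤ m−1 and any p ∈ (0,1), C(m,k)·p^k·(1−p)^{m−k} ≥ exp(−m·D(k/m ‖ p)) / √(8m·(k/m)·(1−k/m)), where D(a‖p) = a·log(a/p) + (1−a)·log((1−a)/(1−p)). -/
/-!
With `s` the Stirling sequence, `n! = s(n) √(2n) (n/e)^n`, and `exp (-m D(k/m ‖ p))` equals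
`p^k (1-p)^j m^m / (k^k j^j)` where `j = m - k`; so the bound amounts to `s(k) s(j) ≤ 2 s(k + j)`.
The differences `log s(n) - log s(n + 1)` are power series in `1 / (2n + 1)` with nonnegative
coefficients, hence decrease: `log s` is convex on the positive integers. Convexity reduces the
inequality to `j = 1`, where it is `s(k) / s(k + 1) ≤ s(1) / s(2)` because `s(1)² = 2 s(2)`;
equality holds at `k = j = 1`.
-/

open Real Stirling
open scoped Nat

namespace Stirling

theorem log_stirlingSeq_sdiff_antitone :
    Antitone fun n : ℕ => log (stirlingSeq (n + 1)) - log (stirlingSeq (n + 2)) := by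
  intro n n' h
  exact hasSum_le (fun k => by gcongr) (log_stirlingSeq_sdiff_hasSum n')
    (log_stirlingSeq_sdiff_hasSum n)

theorem stirlingSeq_one_sq : stirlingSeq 1 ^ 2 = 2 * stirlingSeq 2 := by
  have h4 : √(2 * 2 : ℝ) = 2 := by rw [← sq, sqrt_sq zero_le_two]
  rw [stirlingSeq_one, stirlingSeq, div_pow, sq_sqrt zero_le_two, Nat.cast_ofNat, h4]
  simp only [Nat.factorial]
  field_simp
  norm_num

theorem stirlingSeq_succ_mul_stirlingSeq_succ_le (a b : ℕ) :
    stirlingSeq (a + 1) * stirlingSeq (b + 1) ≤ 2 * stirlingSeq (a + b + 2) := by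
  have hpos (n : ℕ) : 0 < stirlingSeq (n + 1) := stirlingSeq'_pos n
  rw [← log_le_log_iff (mul_pos (hpos a) (hpos b)) (mul_pos two_pos (hpos (a + b + 1))),
    log_mul (hpos a).ne' (hpos b).ne', log_mul two_ne_zero (hpos (a + b + 1)).ne']
  induction b with
  | zero =>
    have h_one_sq := congrArg log stirlingSeq_one_sq
    rw [log_pow, log_mul two_ne_zero (hpos 1).ne'] at h_one_sq
    push_cast at h_one_sq
    have := log_stirlingSeq_sdiff_antitone (Nat.zero_le a)
    simp only [zero_add] at this ⊢
    linarith
  | succ b ih =>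
    have := log_stirlingSeq_sdiff_antitone (show b ≤ a + b + 1 by omega)
    rw [show a + (b + 1) + 2 = a + b + 1 + 2 by ring, show b + 1 + 1 = b + 2 by ring]
    rw [show a + b + 2 = a + b + 1 + 1 by ring] at ih
    linarith

end Stirling

theorem choose_mul_pow_mul_pow_mul_sqrt_mul_stirlingSeq {k j : ℕ} (hk : k ≠ 0) (hj : j ≠ 0) :
    ((k + j).choose k : ℝ) * k ^ k * j ^ j * √(8 * k * j / (k + j)) *
        (stirlingSeq k * stirlingSeq j) =
      2 * stirlingSeq (k + j) * (k + j : ℝ) ^ (k + j) := by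
  have hk' : (0 : ℝ) < k := by positivity
  have hj' : (0 : ℝ) < j := by positivity
  have hsqrt : √(8 * k * j / (k + j) : ℝ) = 2 * √2 * √k * √j / √(k + j) := by
    rw [show (8 : ℝ) = 2 ^ 2 * 2 by norm_num, sqrt_div' _ (by positivity), sqrt_mul' _ hj'.le,
      sqrt_mul' _ hk'.le, sqrt_mul' _ zero_le_two, sqrt_sq zero_le_two]
  simp only [stirlingSeq, Nat.cast_choose ℝ (Nat.le_add_right k j), Nat.add_sub_cancel_left,
    Nat.cast_add, hsqrt, sqrt_mul' 2 hk'.le, sqrt_mul' 2 hj'.le,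
    sqrt_mul' 2 (by positivity : (0 : ℝ) ≤ k + j), div_pow, pow_add]
  field_simp

theorem pow_le_choose_mul_pow_mul_pow_mul_sqrt {k j : ℕ} (hk : k ≠ 0) (hj : j ≠ 0) :
    (k + j : ℝ) ^ (k + j) ≤
      ((k + j).choose k : ℝ) * k ^ k * j ^ j * √(8 * k * j / (k + j)) := by
  obtain ⟨a, rfl⟩ := Nat.exists_eq_add_one_of_ne_zero hk
  obtain ⟨b, rfl⟩ := Nat.exists_eq_add_one_of_ne_zero hj
  have hs : 0 < stirlingSeq (a + 1) * stirlingSeq (b + 1) :=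
    mul_pos (stirlingSeq'_pos a) (stirlingSeq'_pos b)
  refine le_of_mul_le_mul_right ?_ hs
  rw [choose_mul_pow_mul_pow_mul_sqrt_mul_stirlingSeq hk hj,
    show a + 1 + (b + 1) = a + b + 2 by ring]
  calc _ ≤ _ * (2 * stirlingSeq (a + b + 2)) := by
        gcongr ?_ * ?_
        exact stirlingSeq_succ_mul_stirlingSeq_succ_le a b
    _ = _ := by ring

/-- `D(a ‖ p)`, the Kullback–Leibler divergence between Bernoulli laws. -/
noncomputable def bernoulliKL (a p : ℝ) : ℝ :=
  a * log (a / p) + (1 - a) * log ((1 - a) / (1 - p))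

theorem exp_neg_mul_bernoulliKL {k j : ℕ} (hk : k ≠ 0) (hj : j ≠ 0) {p : ℝ} (hp0 : 0 < p)
    (hp1 : p < 1) :
    exp (-(k + j) * bernoulliKL (k / (k + j)) p) =
      p ^ k * (1 - p) ^ j * (k + j : ℝ) ^ (k + j) / (k ^ k * j ^ j) := by
  have hk' : (0 : ℝ) < k := by positivity
  have hj' : (0 : ℝ) < j := by positivity
  have hq : 0 < 1 - p := sub_pos.2 hp1
  have hexponent : -(k + j) * bernoulliKL (k / (k + j)) p =
      k * log (p * (k + j) / k) + j * log ((1 - p) * (k + j) / j) := by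
    have hcompl : 1 - (k : ℝ) / (k + j) = j / (k + j) := by field_simp; ring
    simp only [bernoulliKL, hcompl]
    rw [log_div (by positivity) hp0.ne', log_div (by positivity) hq.ne',
      log_div hk'.ne' (by positivity), log_div hj'.ne' (by positivity),
      log_div (by positivity) hk'.ne', log_div (by positivity) hj'.ne',
      log_mul hp0.ne' (by positivity), log_mul hq.ne' (by positivity)]
    field_simp
    ring
  rw [hexponent, exp_add, exp_nat_mul, exp_nat_mul, exp_log (by positivity),
    exp_log (by positivity), div_pow, div_pow, mul_pow, mul_pow, pow_add (k + j : ℝ)]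
  field_simp

theorem binomial_pointwise_kl_lower_bound_general (m k : ℕ) (hk1 : 1 ≤ k)
    (hk2 : k ≤ m - 1) (p : ℝ) (hp0 : 0 < p) (hp1 : p < 1) :
    (m.choose k : ℝ) * p ^ k * (1 - p) ^ (m - k) ≥
      Real.exp (-(m : ℝ) *
          ((k : ℝ) / m * Real.log (((k : ℝ) / m) / p) +
            (1 - (k : ℝ) / m) * Real.log ((1 - (k : ℝ) / m) / (1 - p)))) /
        Real.sqrt (8 * m * ((k : ℝ) / m) * (1 - (k : ℝ) / m)) := by
  obtain ⟨j, rfl⟩ := Nat.exists_eq_add_of_le (show k ≤ m by omega)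
  have hk : k ≠ 0 := by omega
  have hj : j ≠ 0 := by omega
  have hsqrt_arg : 8 * (k + j : ℝ) * (k / (k + j)) * (1 - k / (k + j)) = 8 * k * j / (k + j) := by
    field_simp
    ring
  rw [Nat.add_sub_cancel_left, Nat.cast_add, hsqrt_arg]
  change _ ≥ exp (-(k + j) * bernoulliKL (k / (k + j)) p) / _
  rw [exp_neg_mul_bernoulliKL hk hj hp0 hp1, ge_iff_le, div_le_iff₀ (by positivity),
    div_le_iff₀ (by positivity)]
  calc p ^ k * (1 - p) ^ j * (k + j : ℝ) ^ (k + j)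
      ≤ p ^ k * (1 - p) ^ j *
          (((k + j).choose k : ℝ) * k ^ k * j ^ j * √(8 * k * j / (k + j))) := by
        gcongr
        exact pow_le_choose_mul_pow_mul_pow_mul_sqrt hk hj
    _ = _ := by ring

/-- Ash's Lemma 4.7.1: a pointwise lower bound on binomial probabilities via
the Bernoulli Kullback–Leibler divergence. -/
theorem binomial_pointwise_kl_lower_bound (m k : ℕ) (hk1 : 1 ≤ k)
    (hk2 : k ≤ m - 1) (hm : 1 ≤ m) (p : ℝ) (hp0 : 0 < p) (hp1 : p < 1) :
    (m.choose k : ℝ) * p ^ k * (1 - p) ^ (m - k) ≥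
      Real.exp (-(m : ℝ) *
          ((k : ℝ) / m * Real.log (((k : ℝ) / m) / p) +
            (1 - (k : ℝ) / m) * Real.log ((1 - (k : ℝ) / m) / (1 - p)))) /
        Real.sqrt (8 * m * ((k : ℝ) / m) * (1 - (k : ℝ) / m)) :=
  binomial_pointwise_kl_lower_bound_general m k hk1 hk2 p hp0 hp1
end
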